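/- arXiv:math/0103194 — 2 statements merged into one kernel-verified Lean document; each statement's English description precedes it below -/
import Mathlib

section
/- Let n ≥ 2 and let σ_1,…,σ_{n−1} be the standard Artin generators of the braid group B_n. Let i_1,…,i_p and j_1,…,j_p be indices in {1,…,n−1} such that σ_{i_1}⋯σ_{i_p} = σ_{j_1}⋯σ_{j_p} in B_n. Then the tuples (σ_{i_1},…,σ_{i_p}) and (σ_{j_1},…,σ_{j_p}) in (B_n)^p are Hurwitz equivalent. -/
/-- The braid relators on generators indexed by `Fin n` (so this presents the
braid group on `n + 1` strands): `σᵢσⱼ = σⱼσᵢ` for `|i - j| > 1` and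
`σᵢσᵢ₊₁σᵢ = σᵢ₊₁σᵢσᵢ₊₁`. -/
def braidRels (n : ℕ) : Set (FreeGroup (Fin n)) :=
  {r | ∃ i j : Fin n, i.val + 2 ≤ j.val ∧
        r = FreeGroup.of i * FreeGroup.of j * (FreeGroup.of j * FreeGroup.of i)⁻¹} ∪
  {r | ∃ i j : Fin n, i.val + 1 = j.val ∧
        r = FreeGroup.of i * FreeGroup.of j * FreeGroup.of i *
            (FreeGroup.of j * FreeGroup.of i * FreeGroup.of j)⁻¹}

/-- The braid group with `n` Artin generators, i.e. the braid group `B_{n+1}`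
on `n + 1` strands. -/
abbrev BraidGroup (n : ℕ) : Type := PresentedGroup (braidRels n)

/-- The Artin generators (zero-based: `σ 0, …, σ (n-1)` are the paper's
`σ₁, …, σₙ`). -/
def σ {n : ℕ} (i : Fin n) : BraidGroup n := PresentedGroup.of i

/-- A single Hurwitz move `R_k` (the position `k` is encoded by the prefix `u`):
`(…, a, b, …) ↦ (…, a b a⁻¹, a, …)`. -/
def HurwitzMove {G : Type*} [Group G] (l l' : List G) : Prop :=
  ∃ (u v : List G) (a b : G),
    l = u ++ a :: b :: v ∧ l' = u ++ (a * b * a⁻¹) :: a :: v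

/-- Hurwitz equivalence: finite sequences of Hurwitz moves and their inverses. -/
def HurwitzEquiv {G : Type*} [Group G] : List G → List G → Prop :=
  Relation.EqvGen HurwitzMove

/-!
Positive words that are equal in the braid group are already related by a chain of braid
relations (Garside's embedding of the positive braid monoid), and a braid relation
`σᵢσⱼ = σⱼσᵢ` or `σᵢσᵢ₊₁σᵢ = σᵢ₊₁σᵢσᵢ₊₁` applied inside a factorization is realized by one,
resp. three, Hurwitz moves.

The positive braid monoid is left cancellative by Garside's lemma: `i·A ≡ j·B` forces
`A ≡ complement i j · C` and `B ≡ complement j i · C`, by induction on the length and a case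
analysis of the first relation that changes the leading letter. It is right cancellative since
the relations are invariant under reversal, and it satisfies the Ore condition since `Δ²` is
central and every positive word left-divides a power of `Δ²`. So it embeds in the units of its
Ore localization, through which the braid group maps.
-/

theorem OreLocalization.numeratorHom_injective {R : Type*} [Monoid R] [IsLeftCancelMul R]
    {S : Submonoid R} [OreLocalization.OreSet S] :
    Function.Injective (OreLocalization.numeratorHom : R → OreLocalization S R) := by
  intro x y h
  obtain ⟨u, v, h₁, h₂⟩ := OreLocalization.oreDiv_eq_iff.1 h
  simp only [OneMemClass.coe_one, mul_one] at h₂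
  rw [Submonoid.smul_def, h₂] at h₁
  exact (mul_left_cancel h₁).symm

section Hurwitz

variable {G : Type*} [Group G]

theorem HurwitzMove.append {l l' : List G} (h : HurwitzMove l l') (p q : List G) :
    HurwitzMove (p ++ l ++ q) (p ++ l' ++ q) := by
  obtain ⟨u, v, a, b, rfl, rfl⟩ := h
  exact ⟨p ++ u, v ++ q, a, b, by simp, by simp⟩

theorem HurwitzEquiv.append {l l' : List G} (h : HurwitzEquiv l l') (p q : List G) :
    HurwitzEquiv (p ++ l ++ q) (p ++ l' ++ q) := by
  induction h with
  | rel _ _ hm => exact .rel _ _ (hm.append p q)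
  | refl => exact .refl _
  | symm _ _ _ ih => exact .symm _ _ ih
  | trans _ _ _ _ _ ih₁ ih₂ => exact .trans _ _ _ ih₁ ih₂

theorem hurwitzEquiv_pair_of_commute {a b : G} (h : Commute a b) : HurwitzEquiv [a, b] [b, a] :=
  .rel _ _ ⟨[], [], a, b, rfl, by rw [h.eq, mul_inv_cancel_right]; rfl⟩

theorem hurwitzEquiv_triple_of_braid {a b : G} (h : a * b * a = b * a * b) :
    HurwitzEquiv [a, b, a] [b, a, b] := by
  have hba : a * b * a⁻¹ * a * (a * b * a⁻¹)⁻¹ = b := by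
    calc a * b * a⁻¹ * a * (a * b * a⁻¹)⁻¹ = a * b * a * b⁻¹ * a⁻¹ := by group
      _ = b := by rw [h]; group
  have m₁ : HurwitzMove [a, b, a] [a * b * a⁻¹, a, a] := ⟨[], [a], a, b, rfl, rfl⟩
  have m₂ : HurwitzMove [a * b * a⁻¹, a, a] [b, a * b * a⁻¹, a] :=
    ⟨[], [a], _, a, rfl, by rw [hba]; rfl⟩
  have m₃ : HurwitzMove [b, a, b] [b, a * b * a⁻¹, a] := ⟨[b], [], a, b, rfl, rfl⟩
  exact .trans _ _ _ (.rel _ _ m₁) (.trans _ _ _ (.rel _ _ m₂) (.symm _ _ (.rel _ _ m₃)))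

end Hurwitz

namespace BraidWord

inductive Step : List ℕ → List ℕ → Prop
  | comm (u v : List ℕ) {i j : ℕ} (h : i + 2 ≤ j) : Step (u ++ i :: j :: v) (u ++ j :: i :: v)
  | braid (u v : List ℕ) (i : ℕ) :
      Step (u ++ i :: (i + 1) :: i :: v) (u ++ (i + 1) :: i :: (i + 1) :: v)

def PosEquiv (w w' : List ℕ) : Prop := Relation.ReflTransGen (Relation.SymmGen Step) w w'

infix:50 " ∼ " => PosEquiv

def Far (i j : ℕ) : Prop := i + 2 ≤ j ∨ j + 2 ≤ i

def Adj (i j : ℕ) : Prop := j = i + 1 ∨ i = j + 1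

theorem Far.symm {i j : ℕ} (h : Far i j) : Far j i := Or.symm h

theorem Adj.symm {i j : ℕ} (h : Adj i j) : Adj j i := Or.symm h

theorem eq_or_far_or_adj (i j : ℕ) : i = j ∨ Far i j ∨ Adj i j := by
  unfold Far Adj; omega

namespace Step

theorem append {w w' : List ℕ} (h : Step w w') (p q : List ℕ) :
    Step (p ++ w ++ q) (p ++ w' ++ q) := by
  cases h with
  | comm u v h => simpa using comm (p ++ u) (v ++ q) h
  | braid u v i => simpa using braid (p ++ u) (v ++ q) i

theorem length_eq {w w' : List ℕ} (h : Step w w') : w.length = w'.length := by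
  cases h <;> simp

theorem mem_iff {w w' : List ℕ} (h : Step w w') (l : ℕ) : l ∈ w ↔ l ∈ w' := by
  cases h <;> simp <;> tauto

theorem reverse {w w' : List ℕ} (h : Step w w') : Relation.SymmGen Step w.reverse w'.reverse := by
  cases h with
  | comm u v h => exact .of_rel_symm (by simpa using comm v.reverse u.reverse h)
  | braid u v i => exact .of_rel (by simpa using braid v.reverse u.reverse i)

end Step

namespace PosEquiv

@[refl]
protected theorem refl (w : List ℕ) : w ∼ w := Relation.ReflTransGen.refl

protected theorem rfl {w : List ℕ} : w ∼ w := Relation.ReflTransGen.refl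

protected theorem trans {w₁ w₂ w₃ : List ℕ} (h : w₁ ∼ w₂) (h' : w₂ ∼ w₃) : w₁ ∼ w₃ :=
  Relation.ReflTransGen.trans h h'

protected theorem symm {w w' : List ℕ} (h : w ∼ w') : w' ∼ w :=
  Std.Symm.symm (r := Relation.ReflTransGen (Relation.SymmGen Step)) _ _ h

instance : Trans PosEquiv PosEquiv PosEquiv := ⟨PosEquiv.trans⟩

theorem of_step {w w' : List ℕ} (h : Step w w') : w ∼ w' := .single (.of_rel h)

theorem append {w w' : List ℕ} (h : w ∼ w') (p q : List ℕ) : p ++ w ++ q ∼ p ++ w' ++ q := by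
  induction h with
  | refl => rfl
  | tail _ hs ih =>
    refine ih.trans (.single ?_)
    rcases hs with hs | hs
    exacts [.of_rel (hs.append p q), .of_rel_symm (hs.append p q)]

theorem append_left {w w' : List ℕ} (h : w ∼ w') (p : List ℕ) : p ++ w ∼ p ++ w' := by
  simpa using h.append p []

theorem append_right {w w' : List ℕ} (h : w ∼ w') (q : List ℕ) : w ++ q ∼ w' ++ q := by
  simpa using h.append [] q

theorem cons {w w' : List ℕ} (h : w ∼ w') (x : ℕ) : x :: w ∼ x :: w' := h.append_left [x]

theorem length_eq {w w' : List ℕ} (h : w ∼ w') : w.length = w'.length := by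
  induction h with
  | refl => rfl
  | tail _ hs ih => rcases hs with hs | hs <;> simp [ih, hs.length_eq]

theorem mem_iff {w w' : List ℕ} (h : w ∼ w') (l : ℕ) : l ∈ w ↔ l ∈ w' := by
  induction h with
  | refl => rfl
  | tail _ hs ih => rcases hs with hs | hs <;> simp [ih, hs.mem_iff l]

theorem reverse {w w' : List ℕ} (h : w ∼ w') : w.reverse ∼ w'.reverse := by
  induction h with
  | refl => rfl
  | tail _ hs ih =>
    refine ih.trans (.single ?_)
    rcases hs with hs | hs
    exacts [hs.reverse, hs.reverse.symm]

theorem swap {i j : ℕ} (h : Far i j) (p q : List ℕ) : p ++ i :: j :: q ∼ p ++ j :: i :: q := by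
  rcases h with h | h
  exacts [of_step (.comm p q h), (of_step (.comm p q h)).symm]

theorem braid {i j : ℕ} (h : Adj i j) (p q : List ℕ) :
    p ++ i :: j :: i :: q ∼ p ++ j :: i :: j :: q := by
  rcases h with rfl | rfl
  exacts [of_step (.braid p q i), (of_step (.braid p q j)).symm]

theorem cons_append_of_far {a : ℕ} {u : List ℕ} (h : ∀ l ∈ u, Far a l) (v : List ℕ) :
    a :: (u ++ v) ∼ u ++ a :: v := by
  induction u with
  | nil => rfl
  | cons x u ih =>
    calc a :: x :: (u ++ v) ∼ x :: a :: (u ++ v) := swap (h x (by simp)) [] _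
      _ ∼ x :: (u ++ a :: v) := (ih fun l hl => h l (by simp [hl])).cons x

end PosEquiv

open PosEquiv

/-- `i :: complement i j ∼ j :: complement j i` is the least common right multiple of `i`
and `j`. -/
def complement (i j : ℕ) : List ℕ :=
  if i = j then [] else if j = i + 1 ∨ i = j + 1 then [j, i] else [j]

@[simp]
theorem complement_self (i : ℕ) : complement i i = [] := by simp [complement]

theorem complement_of_far {i j : ℕ} (h : Far i j) : complement i j = [j] := by
  unfold Far at h
  rw [complement, if_neg (by omega), if_neg (by omega)]

theorem complement_of_adj {i j : ℕ} (h : Adj i j) : complement i j = [j, i] := by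
  unfold Adj at h
  rw [complement, if_neg (by omega), if_pos (by omega)]

theorem complement_append_of_far {i j : ℕ} (h : Far i j) (C : List ℕ) :
    complement i j ++ C = j :: C := by
  rw [complement_of_far h]; rfl

theorem complement_append_of_adj {i j : ℕ} (h : Adj i j) (C : List ℕ) :
    complement i j ++ C = j :: i :: C := by
  rw [complement_of_adj h]; rfl

theorem length_complement_comm (i j : ℕ) : (complement i j).length = (complement j i).length := by
  unfold complement; split_ifs <;> simp_all

theorem mem_complement {i j l : ℕ} (h : l ∈ complement i j) : l = i ∨ l = j := by
  unfold complement at h; split_ifs at h <;> simp at h <;> tauto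

theorem Step.cons_cons {x y : ℕ} {X Y : List ℕ} (h : Step (x :: X) (y :: Y)) :
    (x = y ∧ Step X Y) ∨ (x ≠ y ∧ ∃ C, X = complement x y ++ C ∧ Y = complement y x ++ C) := by
  generalize hw : x :: X = w, hw' : y :: Y = w' at h
  cases h with
  | comm u v hij =>
    rcases u with _ | ⟨z, u⟩ <;>
      simp only [List.nil_append, List.cons_append, List.cons.injEq] at hw hw' <;>
      obtain ⟨rfl, rfl⟩ := hw <;> obtain ⟨rfl, rfl⟩ := hw'
    · exact .inr ⟨by omega, v, (complement_append_of_far (.inl hij) v).symm,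
        (complement_append_of_far (.inr hij) v).symm⟩
    · exact .inl ⟨rfl, .comm u v hij⟩
  | braid u v i =>
    rcases u with _ | ⟨z, u⟩ <;>
      simp only [List.nil_append, List.cons_append, List.cons.injEq] at hw hw' <;>
      obtain ⟨rfl, rfl⟩ := hw <;> obtain ⟨rfl, rfl⟩ := hw'
    · exact .inr ⟨by omega, v, (complement_append_of_adj (.inl rfl) v).symm,
        (complement_append_of_adj (.inr rfl) v).symm⟩
    · exact .inl ⟨rfl, .braid u v i⟩

theorem symmGen_step_cons_cons {x y : ℕ} {X Y : List ℕ}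
    (h : Relation.SymmGen Step (x :: X) (y :: Y)) :
    (x = y ∧ X ∼ Y) ∨ (x ≠ y ∧ ∃ C, X = complement x y ++ C ∧ Y = complement y x ++ C) := by
  rcases h with h | h
  · rcases h.cons_cons with ⟨rfl, hs⟩ | ⟨hxy, C, rfl, rfl⟩
    exacts [.inl ⟨rfl, of_step hs⟩, .inr ⟨hxy, C, rfl, rfl⟩]
  · rcases h.cons_cons with ⟨rfl, hs⟩ | ⟨hxy, C, rfl, rfl⟩
    exacts [.inl ⟨rfl, (of_step hs).symm⟩, .inr ⟨hxy.symm, C, rfl, rfl⟩]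

def ComplementBelow (ℓ : ℕ) : Prop :=
  ∀ ⦃A B : List ℕ⦄ ⦃i j : ℕ⦄, A.length < ℓ → i :: A ∼ j :: B →
    ∃ C, A ∼ complement i j ++ C ∧ B ∼ complement j i ++ C

namespace ComplementBelow

variable {ℓ : ℕ}

theorem mono {ℓ' : ℕ} (h : ComplementBelow ℓ) (hℓ : ℓ' ≤ ℓ) : ComplementBelow ℓ' :=
  fun _ _ _ _ hA => h (by omega)

theorem cancel (ih : ComplementBelow ℓ) {x : ℕ} {A B : List ℕ} (hA : A.length < ℓ)
    (h : x :: A ∼ x :: B) : A ∼ B := by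
  obtain ⟨C, hAC, hBC⟩ := ih hA h
  simp only [complement_self, List.nil_append] at hAC hBC
  exact hAC.trans hBC.symm

end ComplementBelow

section FiveLetter

variable {x m y : ℕ}

theorem PosEquiv.five_letter₁ (hxm : Adj x m) (hmy : Adj m y) (hxy : Far x y) (F : List ℕ) :
    x :: m :: y :: x :: m :: F ∼ m :: y :: x :: m :: y :: F :=
  calc x :: m :: y :: x :: m :: F ∼ x :: m :: x :: y :: m :: F := swap hxy.symm [x, m] (m :: F)
    _ ∼ m :: x :: m :: y :: m :: F := PosEquiv.braid hxm [] (y :: m :: F)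
    _ ∼ m :: x :: y :: m :: y :: F := PosEquiv.braid hmy [m, x] F
    _ ∼ m :: y :: x :: m :: y :: F := swap hxy [m] (m :: y :: F)

theorem PosEquiv.five_letter₂ (hxm : Adj x m) (hmy : Adj m y) (hxy : Far x y) (F : List ℕ) :
    x :: m :: y :: m :: x :: F ∼ y :: m :: x :: m :: y :: F :=
  calc x :: m :: y :: m :: x :: F ∼ x :: y :: m :: y :: x :: F := PosEquiv.braid hmy [x] (x :: F)
    _ ∼ y :: x :: m :: y :: x :: F := swap hxy [] (m :: y :: x :: F)
    _ ∼ y :: x :: m :: x :: y :: F := swap hxy.symm [y, x, m] F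
    _ ∼ y :: m :: x :: m :: y :: F := PosEquiv.braid hxm [y] (y :: F)

theorem PosEquiv.five_letter₃ (hxm : Adj x m) (hmy : Adj m y) (hxy : Far x y) (F : List ℕ) :
    m :: x :: y :: m :: x :: F ∼ y :: m :: x :: y :: m :: F :=
  calc m :: x :: y :: m :: x :: F ∼ m :: y :: x :: m :: x :: F := swap hxy [m] (m :: x :: F)
    _ ∼ m :: y :: m :: x :: m :: F := PosEquiv.braid hxm [m, y] F
    _ ∼ y :: m :: y :: x :: m :: F := PosEquiv.braid hmy [] (x :: m :: F)
    _ ∼ y :: m :: x :: y :: m :: F := swap hxy.symm [y, m] (m :: F)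

end FiveLetter

theorem far_of_adj_of_adj {i a j : ℕ} (hia : Adj i a) (haj : Adj a j) (hij : i ≠ j) : Far i j := by
  unfold Adj at hia haj; unfold Far; omega

theorem ne_of_far_of_adj {i a j : ℕ} (hia : Far i a) (haj : Adj a j) : i ≠ j := by
  unfold Far at hia; unfold Adj at haj; omega

variable {i a j : ℕ} {A₀ C₁ : List ℕ}

theorem cube_far_far (ih : ComplementBelow (A₀.length + 1)) (hia : Far i a) (haj : Far a j)
    (H : i :: A₀ ∼ j :: C₁) :
    ∃ C, a :: A₀ ∼ complement i j ++ C ∧ a :: C₁ ∼ complement j i ++ C := by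
  obtain ⟨D, hAD, hCD⟩ := ih (by omega) H
  have far_a : ∀ {x y : ℕ}, Far a x → Far a y → ∀ l ∈ complement x y, Far a l := by
    intro x y hx hy l hl
    rcases mem_complement hl with rfl | rfl
    exacts [hx, hy]
  exact ⟨a :: D, (hAD.cons a).trans (cons_append_of_far (far_a hia.symm haj) D),
    (hCD.cons a).trans (cons_append_of_far (far_a haj hia.symm) D)⟩

theorem cube_far_adj (ih : ComplementBelow (A₀.length + 1)) (hia : Far i a) (haj : Adj a j)
    (H : i :: A₀ ∼ j :: a :: C₁) :
    ∃ C, a :: A₀ ∼ complement i j ++ C ∧ a :: j :: C₁ ∼ complement j i ++ C := by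
  have hlen := H.length_eq
  simp only [List.length_cons] at hlen
  obtain ⟨D, hAD, hCD⟩ := ih (by omega) H
  rcases eq_or_far_or_adj i j with rfl | hij | hij
  · exact absurd rfl (ne_of_far_of_adj hia haj)
  · simp only [complement_append_of_far hij, complement_append_of_far hij.symm] at hAD hCD ⊢
    obtain ⟨E, hCE, hDE⟩ := ih (by omega) hCD
    simp only [complement_append_of_far hia, complement_append_of_far hia.symm] at hCE hDE
    refine ⟨a :: j :: E, ?_, ?_⟩
    · calc a :: A₀ ∼ a :: j :: a :: E := (hAD.trans (hDE.cons j)).cons a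
        _ ∼ j :: a :: j :: E := PosEquiv.braid haj [] E
    · calc a :: j :: C₁ ∼ a :: j :: i :: E := (hCE.cons j).cons a
        _ ∼ a :: i :: j :: E := swap hij.symm [a] E
        _ ∼ i :: a :: j :: E := swap hia.symm [] (j :: E)
  · simp only [complement_append_of_adj hij, complement_append_of_adj hij.symm] at hAD hCD ⊢
    have hlenD := hAD.length_eq
    simp only [List.length_cons] at hlenD
    obtain ⟨E, hCE, hDE⟩ := ih (by omega) hCD
    simp only [complement_append_of_far hia, complement_append_of_far hia.symm] at hCE hDE
    obtain ⟨F, hDF, hEF⟩ := ih (by omega) hDE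
    simp only [complement_append_of_adj haj, complement_append_of_adj haj.symm] at hDF hEF
    refine ⟨a :: j :: i :: F, ?_, ?_⟩
    · calc a :: A₀ ∼ a :: j :: i :: a :: j :: F := (hAD.trans ((hDF.cons i).cons j)).cons a
        _ ∼ j :: i :: a :: j :: i :: F := five_letter₁ haj hij.symm hia.symm F
    · calc a :: j :: C₁ ∼ a :: j :: i :: j :: a :: F := ((hCE.trans (hEF.cons i)).cons j).cons a
        _ ∼ i :: j :: a :: j :: i :: F := five_letter₂ haj hij.symm hia.symm F

theorem cube_adj_adj (ih : ComplementBelow (A₀.length + 2)) (hia : Adj i a) (haj : Adj a j)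
    (H : i :: a :: A₀ ∼ j :: a :: C₁) :
    ∃ C, a :: i :: A₀ ∼ complement i j ++ C ∧ a :: j :: C₁ ∼ complement j i ++ C := by
  have hlen := H.length_eq
  simp only [List.length_cons] at hlen
  rcases eq_or_ne i j with rfl | hne
  · have hAC : A₀ ∼ C₁ := ih.cancel (by omega) (ih.cancel (by simp) H)
    exact ⟨a :: i :: A₀, by simp [PosEquiv.rfl], by simpa using ((hAC.cons i).cons a).symm⟩
  have hij := far_of_adj_of_adj hia haj hne
  obtain ⟨D, hAD, hCD⟩ := ih (by simp) H
  simp only [complement_append_of_far hij, complement_append_of_far hij.symm] at hAD hCD ⊢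
  obtain ⟨E, hAE, hDE⟩ := ih (by omega) hAD
  simp only [complement_append_of_adj haj, complement_append_of_adj haj.symm] at hAE hDE
  have hlenE := hAE.length_eq
  simp only [List.length_cons] at hlenE
  obtain ⟨F, hCF, hEF⟩ := ih (by omega) (hCD.trans (hDE.cons i))
  simp only [complement_append_of_adj hia, complement_append_of_adj hia.symm] at hCF hEF
  obtain ⟨G, hEG, hFG⟩ := ih (by omega) (ih.cancel (by simp; omega) hEF)
  simp only [complement_append_of_far hij, complement_append_of_far hij.symm] at hEG hFG
  refine ⟨a :: i :: j :: a :: G, ?_, ?_⟩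
  · calc a :: i :: A₀ ∼ a :: i :: j :: a :: i :: G :=
          ((hAE.trans ((hEG.cons a).cons j)).cons i).cons a
      _ ∼ j :: a :: i :: j :: a :: G := five_letter₃ hia haj hij G
  · calc a :: j :: C₁ ∼ a :: j :: i :: a :: j :: G :=
          ((hCF.trans ((hFG.cons a).cons i)).cons j).cons a
      _ ∼ i :: a :: j :: i :: a :: G := five_letter₃ haj.symm hia.symm hij.symm G
      _ ∼ i :: a :: i :: j :: a :: G := swap hij.symm [i, a] (a :: G)

theorem cube {i a j : ℕ} {A₀ C₁ : List ℕ} (ih : ComplementBelow (complement i a ++ A₀).length)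
    (hia : i ≠ a) (H : complement a i ++ A₀ ∼ complement a j ++ C₁) :
    ∃ C, complement i a ++ A₀ ∼ complement i j ++ C ∧
      complement j a ++ C₁ ∼ complement j i ++ C := by
  rcases eq_or_ne a j with rfl | haj
  · exact ⟨A₀, .rfl, by simpa using H.symm⟩
  have hlen := H.length_eq
  simp only [List.length_append, length_complement_comm a] at hlen
  rcases eq_or_far_or_adj i a with rfl | hia | hia
  · exact absurd rfl hia
  all_goals rcases eq_or_far_or_adj a j with rfl | haj | haj
  all_goals first
    | exact absurd rfl haj
    | simp only [complement_of_far, complement_of_adj, hia, hia.symm, haj, haj.symm,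
        List.length_cons, List.length_nil, List.cons_append,
        List.nil_append] at ih hlen H ⊢
  · exact cube_far_far ih hia haj H
  · exact cube_far_adj ih hia haj H
  · obtain ⟨C, h₁, h₂⟩ := cube_far_adj (ih.mono (by omega)) haj.symm hia.symm H.symm
    exact ⟨C, h₂, h₁⟩
  · exact cube_adj_adj ih hia haj H

theorem exists_complement_of_cons {A B : List ℕ} {i j : ℕ} (ih : ComplementBelow A.length)
    (h : i :: A ∼ j :: B) : ∃ C, A ∼ complement i j ++ C ∧ B ∼ complement j i ++ C := by
  suffices ∀ w, w ∼ j :: B → ∀ i A, w = i :: A → ComplementBelow A.length →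
      ∃ C, A ∼ complement i j ++ C ∧ B ∼ complement j i ++ C from this _ h i A rfl ih
  intro w hw
  induction hw using Relation.ReflTransGen.head_induction_on with
  | refl =>
    rintro i A ⟨⟩ -
    exact ⟨B, by simp [PosEquiv.rfl], by simp [PosEquiv.rfl]⟩
  | @head _ w' hs _ ihw =>
    rintro i A rfl hA
    obtain ⟨y, Y, rfl⟩ : ∃ y Y, w' = y :: Y := by
      have := PosEquiv.length_eq (.single hs)
      cases w' with
      | nil => simp at this
      | cons y Y => exact ⟨y, Y, rfl⟩
    rcases symmGen_step_cons_cons hs with ⟨rfl, hAY⟩ | ⟨hiy, A₀, rfl, rfl⟩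
    · obtain ⟨C, hYC, hBC⟩ := ihw i Y rfl (hAY.length_eq ▸ hA)
      exact ⟨C, hAY.trans hYC, hBC⟩
    · obtain ⟨C₁, hYC, hBC⟩ := ihw y _ rfl (by simpa [length_complement_comm y i] using hA)
      obtain ⟨C, hAC, hC⟩ := cube hA hiy hYC
      exact ⟨C, hAC, hBC.trans hC⟩

/-- Garside's lemma. -/
theorem complementBelow (ℓ : ℕ) : ComplementBelow ℓ := by
  induction ℓ with
  | zero => exact fun _ _ _ _ hA => absurd hA (Nat.not_lt_zero _)
  | succ ℓ ih => exact fun _ _ _ _ hA => exists_complement_of_cons (ih.mono (by omega))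

theorem PosEquiv.cancel_left {u A B : List ℕ} (h : u ++ A ∼ u ++ B) : A ∼ B := by
  induction u with
  | nil => simpa using h
  | cons x u ih => exact ih ((complementBelow _).cancel (Nat.lt_succ_self _) h)

def con : Con (FreeMonoid ℕ) where
  r x y := x.toList ∼ y.toList
  iseqv := ⟨fun _ => .rfl, PosEquiv.symm, PosEquiv.trans⟩
  mul' h h' := by
    simpa only [FreeMonoid.toList_mul] using (h.append_right _).trans (h'.append_left _)

section HurwitzMap

variable {G : Type*} [Group G]

theorem Step.hurwitzEquiv_map {N : ℕ} {g : ℕ → G}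
    (hcomm : ∀ i j, i + 2 ≤ j → j < N → Commute (g i) (g j))
    (hbraid : ∀ i, i + 1 < N → g i * g (i + 1) * g i = g (i + 1) * g i * g (i + 1))
    {w w' : List ℕ} (h : Step w w') (hw : ∀ l ∈ w, l < N) :
    HurwitzEquiv (w.map g) (w'.map g) := by
  cases h with
  | comm u v hij =>
    simpa using (hurwitzEquiv_pair_of_commute (hcomm _ _ hij (hw _ (by simp)))).append
      (u.map g) (v.map g)
  | braid u v i =>
    simpa using (hurwitzEquiv_triple_of_braid (hbraid i (hw _ (by simp)))).append
      (u.map g) (v.map g)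

theorem PosEquiv.hurwitzEquiv_map {N : ℕ} {g : ℕ → G}
    (hcomm : ∀ i j, i + 2 ≤ j → j < N → Commute (g i) (g j))
    (hbraid : ∀ i, i + 1 < N → g i * g (i + 1) * g i = g (i + 1) * g i * g (i + 1))
    {w w' : List ℕ} (h : w ∼ w') (hw : ∀ l ∈ w, l < N) :
    HurwitzEquiv (w.map g) (w'.map g) := by
  induction h with
  | refl => exact .refl _
  | @tail w₁ w₂ h₁ hs ih =>
    have hw₁ : ∀ l ∈ w₁, l < N := fun l hl => hw l ((PosEquiv.mem_iff h₁ l).2 hl)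
    refine .trans _ _ _ ih ?_
    rcases hs with hs | hs
    · exact hs.hurwitzEquiv_map hcomm hbraid hw₁
    · exact .symm _ _ <| hs.hurwitzEquiv_map hcomm hbraid fun l hl => hw₁ l ((hs.mem_iff l).1 hl)

end HurwitzMap

end BraidWord

/-- The positive braid monoid on the generators `0, 1, 2, …`. -/
abbrev BraidMonoid : Type := BraidWord.con.Quotient

namespace BraidMonoid

open BraidWord

def mk (w : List ℕ) : BraidMonoid := (FreeMonoid.ofList w : FreeMonoid ℕ)

def gen (i : ℕ) : BraidMonoid := mk [i]

theorem mk_eq_mk_iff {w w' : List ℕ} : mk w = mk w' ↔ w ∼ w' := by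
  simp only [mk, Con.eq]; rfl

theorem mk_surjective : Function.Surjective mk := by
  intro x
  induction x using Con.induction_on with
  | _ x => exact ⟨x.toList, rfl⟩

@[simp]
theorem mk_nil : mk [] = 1 := rfl

theorem mk_append (w w' : List ℕ) : mk (w ++ w') = mk w * mk w' := by
  simp only [mk, FreeMonoid.ofList_append, Con.coe_mul]

theorem mk_cons (i : ℕ) (w : List ℕ) : mk (i :: w) = gen i * mk w := mk_append [i] w

theorem gen_commute {i j : ℕ} (h : Far i j) : Commute (gen i) (gen j) := by
  rw [Commute, SemiconjBy, gen, gen, ← mk_append, ← mk_append, mk_eq_mk_iff]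
  exact PosEquiv.swap h [] []

theorem gen_braid (i : ℕ) : gen i * gen (i + 1) * gen i = gen (i + 1) * gen i * gen (i + 1) := by
  simp only [gen, ← mk_append, mk_eq_mk_iff]
  exact PosEquiv.braid (.inl rfl) [] []

instance : IsCancelMul BraidMonoid where
  mul_left_cancel a b c h := by
    obtain ⟨a, rfl⟩ := mk_surjective a
    obtain ⟨b, rfl⟩ := mk_surjective b
    obtain ⟨c, rfl⟩ := mk_surjective c
    simp only [← mk_append, mk_eq_mk_iff] at h
    exact mk_eq_mk_iff.2 h.cancel_left
  mul_right_cancel a b c h := by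
    obtain ⟨a, rfl⟩ := mk_surjective a
    obtain ⟨b, rfl⟩ := mk_surjective b
    obtain ⟨c, rfl⟩ := mk_surjective c
    simp only [← mk_append, mk_eq_mk_iff] at h
    have : a.reverse ++ b.reverse ∼ a.reverse ++ c.reverse := by simpa using h.reverse
    simpa using mk_eq_mk_iff.2 this.cancel_left.reverse

def asc : ℕ → BraidMonoid
  | 0 => 1
  | r + 1 => asc r * gen r

def desc : ℕ → BraidMonoid
  | 0 => 1
  | r + 1 => gen r * desc r

/-- Garside's fundamental braid on the generators `0, …, r - 1`. -/
def delta : ℕ → BraidMonoid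
  | 0 => 1
  | r + 1 => asc (r + 1) * delta r

theorem commute_gen_asc {i r : ℕ} (h : r + 1 ≤ i) : Commute (gen i) (asc r) := by
  induction r with
  | zero => exact Commute.one_right _
  | succ r ih => exact (ih (by omega)).mul_right (gen_commute (.inr (by omega)))

theorem commute_gen_desc {i r : ℕ} (h : r + 1 ≤ i) : Commute (gen i) (desc r) := by
  induction r with
  | zero => exact Commute.one_right _
  | succ r ih => exact (gen_commute (.inr (by omega))).mul_right (ih (by omega))

theorem commute_gen_delta {i r : ℕ} (h : r + 1 ≤ i) : Commute (gen i) (delta r) := by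
  induction r with
  | zero => exact Commute.one_right _
  | succ r ih => exact (commute_gen_asc (by omega)).mul_right (ih (by omega))

theorem gen_succ_mul_asc {i r : ℕ} (h : i < r) :
    gen (i + 1) * asc (r + 1) = asc (r + 1) * gen i := by
  induction r with
  | zero => omega
  | succ r ih =>
    rcases Nat.lt_succ_iff_lt_or_eq.1 h with h | rfl
    · calc gen (i + 1) * asc (r + 2) = gen (i + 1) * asc (r + 1) * gen (r + 1) :=
            (mul_assoc ..).symm
        _ = asc (r + 1) * (gen i * gen (r + 1)) := by rw [ih h, mul_assoc]
        _ = asc (r + 2) * gen i := by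
          rw [(gen_commute (.inl (by omega))).eq, ← mul_assoc]; rfl
    · calc gen (i + 1) * asc (i + 2) = gen (i + 1) * asc i * gen i * gen (i + 1) := by
            simp only [asc, mul_assoc]
        _ = asc i * (gen (i + 1) * gen i * gen (i + 1)) := by
            rw [(commute_gen_asc le_rfl).eq]; simp only [mul_assoc]
        _ = asc (i + 2) * gen i := by rw [← gen_braid]; simp only [asc, mul_assoc]

theorem gen_mul_desc {i r : ℕ} (h : i < r) :
    gen i * desc (r + 1) = desc (r + 1) * gen (i + 1) := by
  induction r with
  | zero => omega
  | succ r ih =>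
    rcases Nat.lt_succ_iff_lt_or_eq.1 h with h | rfl
    · calc gen i * desc (r + 2) = gen (r + 1) * (gen i * desc (r + 1)) := by
            rw [desc, ← mul_assoc, (gen_commute (.inl (by omega))).eq, mul_assoc]
        _ = desc (r + 2) * gen (i + 1) := by rw [ih h, ← mul_assoc]; rfl
    · calc gen i * desc (i + 2) = gen i * gen (i + 1) * gen i * desc i := by
            simp only [desc, mul_assoc]
        _ = gen (i + 1) * gen i * (gen (i + 1) * desc i) := by rw [gen_braid]; simp only [mul_assoc]
        _ = desc (i + 2) * gen (i + 1) := by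
            rw [(commute_gen_desc le_rfl).eq]; simp only [desc, mul_assoc]

theorem delta_succ (r : ℕ) : delta (r + 1) = delta r * desc (r + 1) := by
  induction r with
  | zero => simp [delta, asc, desc]
  | succ r ih =>
    calc delta (r + 2) = asc (r + 1) * (gen (r + 1) * delta r) * desc (r + 1) := by
          rw [delta, ih]; simp only [asc, mul_assoc]
      _ = delta (r + 1) * desc (r + 2) := by
          rw [(commute_gen_delta le_rfl).eq]; simp only [delta, desc, mul_assoc]

theorem gen_zero_mul_delta (j : ℕ) : gen 0 * delta (j + 1) = delta (j + 1) * gen j := by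
  induction j with
  | zero => simp [delta, asc]
  | succ j ih =>
    rw [delta_succ, ← mul_assoc, ih, mul_assoc, gen_mul_desc (Nat.lt_succ_self j), ← mul_assoc]

/-- Conjugation by `delta r` maps `gen i` to `gen (r - 1 - i)`. -/
theorem gen_mul_delta (i j : ℕ) : gen i * delta (i + j + 1) = delta (i + j + 1) * gen j := by
  induction i with
  | zero => simpa using gen_zero_mul_delta j
  | succ i ih =>
    rw [show i + 1 + j + 1 = i + j + 1 + 1 by omega, delta, ← mul_assoc,
      gen_succ_mul_asc (by omega), mul_assoc, ih, ← mul_assoc]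

theorem commute_gen_delta_sq {i m : ℕ} (h : i < m) : Commute (gen i) (delta m * delta m) := by
  obtain ⟨j, rfl⟩ : ∃ j, m = i + j + 1 := ⟨m - i - 1, by omega⟩
  have h' := gen_mul_delta j i
  rw [show j + i + 1 = i + j + 1 by omega] at h'
  simp only [Commute, SemiconjBy, ← mul_assoc, gen_mul_delta]
  rw [mul_assoc, h', ← mul_assoc]

theorem gen_zero_dvd_asc (r : ℕ) : gen 0 ∣ asc (r + 1) := by
  induction r with
  | zero => exact ⟨1, by simp [asc]⟩
  | succ r ih => exact dvd_mul_of_dvd_left ih _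

theorem gen_dvd_delta {i m : ℕ} (h : i < m) : gen i ∣ delta m := by
  induction m generalizing i with
  | zero => omega
  | succ m ih =>
    rcases i with _ | i
    · exact dvd_mul_of_dvd_left (gen_zero_dvd_asc m) _
    · obtain ⟨d, hd⟩ := ih (Nat.lt_of_succ_lt_succ h)
      exact ⟨asc (m + 1) * d, by rw [delta, hd, ← mul_assoc, ← mul_assoc,
        gen_succ_mul_asc (Nat.lt_of_succ_lt_succ h)]⟩

theorem mk_eq_prod (w : List ℕ) : mk w = (w.map gen).prod := by
  induction w with
  | nil => rfl
  | cons i w ih => rw [mk_cons, ih, List.map_cons, List.prod_cons]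

theorem commute_delta_sq_mk {m : ℕ} {w : List ℕ} (hw : ∀ l ∈ w, l < m) :
    Commute (delta m * delta m) (mk w) := by
  induction w with
  | nil => exact Commute.one_right _
  | cons i w ih =>
    rw [mk_cons]
    exact (commute_gen_delta_sq (hw i (by simp))).symm.mul_right
      (ih fun l hl => hw l (by simp [hl]))

theorem exists_mk_mul_eq_delta_sq_pow {m : ℕ} {w : List ℕ} (hw : ∀ l ∈ w, l < m) :
    ∃ u, mk w * u = (delta m * delta m) ^ w.length := by
  induction w with
  | nil => exact ⟨1, by simp⟩
  | cons i w ih =>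
    obtain ⟨u, hu⟩ := ih fun l hl => hw l (by simp [hl])
    obtain ⟨d, hd⟩ := gen_dvd_delta (hw i (by simp))
    refine ⟨u * d * delta m, ?_⟩
    calc mk (i :: w) * (u * d * delta m) = gen i * (mk w * u) * d * delta m := by
          rw [mk_cons]; simp only [mul_assoc]
      _ = (delta m * delta m) ^ w.length * (gen i * d * delta m) := by
          rw [hu, ((commute_gen_delta_sq (hw i (by simp))).pow_right _).eq]; simp only [mul_assoc]
      _ = (delta m * delta m) ^ (i :: w).length := by rw [← hd, List.length_cons, pow_succ]

/-- The left Ore condition: `delta m ^ 2` is central on the generators below `m`, and every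
positive word left-divides one of its powers. -/
theorem exists_mul_eq_mul (r s : BraidMonoid) : ∃ a b, a * r = b * s := by
  obtain ⟨w, rfl⟩ := mk_surjective r
  obtain ⟨v, rfl⟩ := mk_surjective s
  obtain ⟨m, hm⟩ : ∃ m, ∀ l ∈ w ++ v, l < m :=
    ⟨(w ++ v).sum + 1, fun l hl => Nat.lt_succ_of_le (List.le_sum_of_mem hl)⟩
  have hw : ∀ l ∈ w, l < m := fun l hl => hm l (by simp [hl])
  have hv : ∀ l ∈ v, l < m := fun l hl => hm l (by simp [hl])
  obtain ⟨u, hu⟩ := exists_mk_mul_eq_delta_sq_pow hv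
  have hu' : u * mk v = (delta m * delta m) ^ v.length := mul_left_cancel (a := mk v) <| by
    rw [← mul_assoc, hu, ((commute_delta_sq_mk hv).pow_left _).eq]
  refine ⟨(delta m * delta m) ^ v.length, mk w * u, ?_⟩
  rw [mul_assoc, hu', ((commute_delta_sq_mk hw).pow_left _).eq]

noncomputable instance : OreLocalization.OreSet (⊤ : Submonoid BraidMonoid) where
  ore_right_cancel _ _ _ h := ⟨1, by rw [mul_right_cancel h]⟩
  oreNum r s := (exists_mul_eq_mul r s).choose_spec.choose
  oreDenom r s := ⟨(exists_mul_eq_mul r s).choose, trivial⟩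
  ore_eq r s := (exists_mul_eq_mul r s).choose_spec.choose_spec

abbrev Fractions : Type := OreLocalization (⊤ : Submonoid BraidMonoid) BraidMonoid

open OreLocalization in
noncomputable def toUnits : BraidMonoid →* Fractionsˣ :=
  IsUnit.liftRight numeratorHom fun x => numerator_isUnit (⟨x, trivial⟩ : (⊤ : Submonoid _))

theorem toUnits_injective : Function.Injective toUnits := fun _ _ h =>
  OreLocalization.numeratorHom_injective (congrArg Units.val h)

end BraidMonoid

namespace BraidGroup

variable {N : ℕ}

theorem σ_commute {i j : Fin N} (h : i.val + 2 ≤ j.val) : Commute (σ i) (σ j) := by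
  have := PresentedGroup.mk_eq_mk_of_mul_inv_mem (rels := braidRels N) (.inl ⟨i, j, h, rfl⟩)
  rwa [map_mul, map_mul] at this

theorem σ_braid {i j : Fin N} (h : i.val + 1 = j.val) : σ i * σ j * σ i = σ j * σ i * σ j := by
  have := PresentedGroup.mk_eq_mk_of_mul_inv_mem (rels := braidRels N) (.inr ⟨i, j, h, rfl⟩)
  rwa [map_mul, map_mul, map_mul, map_mul] at this

noncomputable def toUnits (N : ℕ) : BraidGroup N →* BraidMonoid.Fractionsˣ :=
  PresentedGroup.toGroup (f := fun i : Fin N => BraidMonoid.toUnits (BraidMonoid.gen i)) <| by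
    rintro r (⟨i, j, h, rfl⟩ | ⟨i, j, h, rfl⟩) <;>
      simp only [map_mul, map_inv, mul_inv_eq_one, FreeGroup.lift_apply_of] <;>
      simp only [← map_mul]
    · exact congrArg _ (BraidMonoid.gen_commute (.inl h)).eq
    · rw [← h]
      exact congrArg _ (BraidMonoid.gen_braid i)

theorem toUnits_σ (i : Fin N) : toUnits N (σ i) = BraidMonoid.toUnits (BraidMonoid.gen i) :=
  PresentedGroup.toGroup.of _

theorem toUnits_prod (u : List (Fin N)) :
    toUnits N (u.map σ).prod = BraidMonoid.toUnits (BraidMonoid.mk (u.map Fin.val)) := by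
  simp only [map_list_prod, BraidMonoid.mk_eq_prod, List.map_map, Function.comp_def, toUnits_σ]

theorem posEquiv_of_prod_eq {u v : List (Fin N)} (h : (u.map σ).prod = (v.map σ).prod) :
    u.map Fin.val ∼ v.map Fin.val := by
  have := congrArg (toUnits N) h
  rw [toUnits_prod, toUnits_prod] at this
  exact BraidMonoid.mk_eq_mk_iff.1 (BraidMonoid.toUnits_injective this)

theorem hurwitzEquiv_of_prod_eq {u v : List (Fin N)} (h : (u.map σ).prod = (v.map σ).prod) :
    HurwitzEquiv (u.map σ) (v.map σ) := by
  let g : ℕ → BraidGroup N := fun l => if hl : l < N then σ ⟨l, hl⟩ else 1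
  have hg : ∀ w : List (Fin N), (w.map Fin.val).map g = w.map σ := fun w => by simp [g]
  rw [← hg u, ← hg v]
  refine (posEquiv_of_prod_eq h).hurwitzEquiv_map (N := N) (fun i j hij hj => ?_) (fun i hi => ?_)
    (by simp)
  · simp only [g, dif_pos hj, dif_pos (show i < N by omega)]
    exact σ_commute (i := ⟨i, _⟩) (j := ⟨j, _⟩) hij
  · simp only [g, dif_pos hi, dif_pos (show i < N by omega)]
    exact σ_braid (i := ⟨i, _⟩) (j := ⟨i + 1, _⟩) rfl

end BraidGroup

theorem hurwitz_equiv_of_eq_positive_words_general {n p : ℕ}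
    (i j : Fin p → Fin (n - 1))
    (h : (List.ofFn fun k => σ (i k)).prod = (List.ofFn fun k => σ (j k)).prod) :
    HurwitzEquiv (List.ofFn fun k => σ (i k)) (List.ofFn fun k => σ (j k)) := by
  have h' : ((List.ofFn i).map σ).prod = ((List.ofFn j).map σ).prod := by
    simpa [List.map_ofFn, Function.comp_def] using h
  simpa [List.map_ofFn, Function.comp_def] using BraidGroup.hurwitzEquiv_of_prod_eq h'

/-- Two equal positive words in the Artin generators of `Bₙ` give Hurwitz
equivalent factorizations. -/
theorem hurwitz_equiv_of_eq_positive_words {n p : ℕ} (hn : 2 ≤ n)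
    (i j : Fin p → Fin (n - 1))
    (h : (List.ofFn fun k => σ (i k)).prod = (List.ofFn fun k => σ (j k)).prod) :
    HurwitzEquiv (List.ofFn fun k => σ (i k)) (List.ofFn fun k => σ (j k)) :=
  hurwitz_equiv_of_eq_positive_words_general i j h
end

section
/- Let n ≥ 2 and let σ_1,…,σ_{n−1} be the standard Artin generators of B_n. For every braid b ∈ B_n, the n(n−1)-tuple consisting of n consecutive copies of the sequence (σ_1, σ_2, …, σ_{n−1}) is Hurwitz equivalent to the n(n−1)-tuple consisting of n consecutive copies of the sequence (b σ_1 b⁻¹, b σ_2 b⁻¹, …, b σ_{n−1} b⁻¹). -/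
section Hurwitz

variable {G : Type*} [Group G]

theorem HurwitzMove.hurwitzEquiv {l l' : List G} (h : HurwitzMove l l') : HurwitzEquiv l l' :=
  .rel _ _ h

theorem HurwitzEquiv.refl (l : List G) : HurwitzEquiv l l := Relation.EqvGen.refl l

theorem HurwitzEquiv.symm {l l' : List G} (h : HurwitzEquiv l l') : HurwitzEquiv l' l :=
  Relation.EqvGen.symm _ _ h

theorem HurwitzEquiv.trans {l₁ l₂ l₃ : List G} (h : HurwitzEquiv l₁ l₂)
    (h' : HurwitzEquiv l₂ l₃) : HurwitzEquiv l₁ l₃ :=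
  Relation.EqvGen.trans _ _ _ h h'

theorem hurwitzMove_cons_cons (a b : G) (v : List G) :
    HurwitzMove (a :: b :: v) ((a * b * a⁻¹) :: a :: v) :=
  ⟨[], v, a, b, rfl, rfl⟩

theorem HurwitzEquiv.cons {l l' : List G} (a : G) (h : HurwitzEquiv l l') :
    HurwitzEquiv (a :: l) (a :: l') := by
  induction h with
  | rel x y hxy =>
    obtain ⟨u, v, c, d, rfl, rfl⟩ := hxy
    exact HurwitzMove.hurwitzEquiv ⟨a :: u, v, c, d, rfl, rfl⟩
  | refl x => exact .refl _
  | symm x y _ ih => exact ih.symm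
  | trans x y z _ _ ih₁ ih₂ => exact ih₁.trans ih₂

theorem HurwitzEquiv.map {H F : Type*} [Group H] [FunLike F G H] [MonoidHomClass F G H] (f : F)
    {l l' : List G} (h : HurwitzEquiv l l') : HurwitzEquiv (l.map f) (l'.map f) := by
  induction h with
  | rel x y hxy =>
    obtain ⟨u, v, a, b, rfl, rfl⟩ := hxy
    exact HurwitzMove.hurwitzEquiv ⟨u.map f, v.map f, f a, f b, by simp, by simp⟩
  | refl x => exact .refl _
  | symm x y _ ih => exact ih.symm
  | trans x y z _ _ ih₁ ih₂ => exact ih₁.trans ih₂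

theorem hurwitzEquiv_cons_map_conj (a : G) (v : List G) :
    HurwitzEquiv (a :: v) ((v ++ [a]).map (MulAut.conj a)) := by
  induction v with
  | nil => simpa using HurwitzEquiv.refl [a]
  | cons b v ih =>
    simpa using (hurwitzMove_cons_cons a b v).hurwitzEquiv.trans (ih.cons _)

theorem hurwitzEquiv_cons_conj_prod (a : G) (v : List G) :
    HurwitzEquiv (a :: v) (v ++ [v.prod⁻¹ * a * v.prod]) := by
  induction v generalizing a with
  | nil => simpa using HurwitzEquiv.refl [a]
  | cons b v ih =>
    have hmove := hurwitzMove_cons_cons b (b⁻¹ * a * b) v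
    rw [show b * (b⁻¹ * a * b) * b⁻¹ = a by group] at hmove
    simpa [mul_assoc] using hmove.hurwitzEquiv.symm.trans ((ih (b⁻¹ * a * b)).cons b)

theorem hurwitzEquiv_append_map_conj_prod (u v : List G) :
    HurwitzEquiv (u ++ v) ((v ++ u).map (MulAut.conj u.prod)) := by
  induction u generalizing v with
  | nil => simpa using HurwitzEquiv.refl v
  | cons a u ih =>
    refine (hurwitzEquiv_cons_map_conj a (u ++ v)).trans ?_
    simpa [List.map_map, Function.comp_def, mul_assoc] using
      (ih (v ++ [a])).map (MulAut.conj a)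

theorem hurwitzEquiv_append_comm {u v : List G} (h : ∀ x ∈ u, Commute x (u ++ v).prod) :
    HurwitzEquiv (u ++ v) (v ++ u) := by
  induction u generalizing v with
  | nil => simpa using HurwitzEquiv.refl v
  | cons a u ih =>
    have ha : Commute a (u ++ v).prod := by
      simpa using (Commute.refl a).inv_right.mul_right (h a List.mem_cons_self)
    have hprod : (u ++ (v ++ [a])).prod = (a :: u ++ v).prod := by
      simpa [mul_assoc] using ha.symm.eq
    have hpass := hurwitzEquiv_cons_conj_prod a (u ++ v)
    rw [ha.symm.inv_mul_cancel, List.append_assoc] at hpass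
    have hrest : HurwitzEquiv (u ++ (v ++ [a])) ((v ++ [a]) ++ u) :=
      ih fun x hx => hprod ▸ h x (List.mem_cons_of_mem a hx)
    simpa using hpass.trans hrest

end Hurwitz

section Stabilizer

variable {G : Type*} [Group G]

def hurwitzStabilizer (l : List G) : Subgroup G where
  carrier := {g | HurwitzEquiv l (l.map (MulAut.conj g))}
  one_mem' := by simpa using HurwitzEquiv.refl l
  mul_mem' {g h} hg hh := by
    simpa using hg.trans (hh.map (MulAut.conj g))
  inv_mem' {g} hg := by
    simpa using (hg.map (MulAut.conj g⁻¹)).symm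

theorem mem_hurwitzStabilizer {l : List G} {g : G} :
    g ∈ hurwitzStabilizer l ↔ HurwitzEquiv l (l.map (MulAut.conj g)) := Iff.rfl

theorem prod_mem_hurwitzStabilizer {u v : List G} (h : ∀ x ∈ u, Commute x (u ++ v).prod) :
    u.prod ∈ hurwitzStabilizer (u ++ v) :=
  (hurwitzEquiv_append_map_conj_prod u v).trans ((hurwitzEquiv_append_comm h).symm.map _)

end Stabilizer

namespace BraidGroup

variable {N : ℕ}

def gen (N i : ℕ) : BraidGroup N := if h : i < N then σ ⟨i, h⟩ else 1

theorem gen_of_lt {i : ℕ} (h : i < N) : gen N i = σ ⟨i, h⟩ := dif_pos h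

theorem commute_gen_gen {i j : ℕ} (h : i + 2 ≤ j) : Commute (gen N i) (gen N j) := by
  by_cases hj : j < N
  · rw [gen_of_lt (by omega), gen_of_lt hj]
    exact PresentedGroup.mk_eq_mk_of_mul_inv_mem (Or.inl ⟨_, _, h, rfl⟩)
  · simp [gen, hj]

theorem gen_braid {i : ℕ} (h : i + 1 < N) :
    gen N i * gen N (i + 1) * gen N i = gen N (i + 1) * gen N i * gen N (i + 1) := by
  rw [gen_of_lt (by omega), gen_of_lt h]
  exact PresentedGroup.mk_eq_mk_of_mul_inv_mem (Or.inr ⟨_, _, rfl, rfl⟩)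

/-- `σ₁ ⋯ σₖ` in the paper's one-based numbering. -/
def prodGen (N k : ℕ) : BraidGroup N := ((List.range k).map (gen N)).prod

theorem prodGen_succ (k : ℕ) : prodGen N (k + 1) = prodGen N k * gen N k := by
  simp [prodGen, List.range_succ]

theorem commute_gen_prodGen {j k : ℕ} (h : k < j) : Commute (gen N j) (prodGen N k) := by
  induction k with
  | zero => exact Commute.one_right _
  | succ k ih =>
    rw [prodGen_succ]
    exact (ih (by omega)).mul_right (commute_gen_gen (by omega)).symm

theorem prodGen_mul_gen {i k : ℕ} (hi : i + 2 ≤ k) (hk : k ≤ N) :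
    prodGen N k * gen N i = gen N (i + 1) * prodGen N k := by
  induction k, hi using Nat.le_induction with
  | base =>
    rw [prodGen_succ, prodGen_succ, mul_assoc, mul_assoc, ← mul_assoc (gen N i),
      gen_braid (by omega), ← mul_assoc, ← mul_assoc,
      ← (commute_gen_prodGen (lt_add_one i)).eq]
    group
  | succ k hik ih =>
    rw [prodGen_succ, mul_assoc, (commute_gen_gen hik).symm.eq, ← mul_assoc, ih (by omega),
      mul_assoc]

theorem prodGen_pow_mul_gen {i k : ℕ} (h : i + k < N) :
    prodGen N N ^ k * gen N i = gen N (i + k) * prodGen N N ^ k := by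
  induction k with
  | zero => simp
  | succ k ih =>
    rw [pow_succ', mul_assoc, ih (by omega), ← mul_assoc, prodGen_mul_gen (by omega) le_rfl,
      mul_assoc, ← add_assoc]

theorem gen_zero_mul_prodGen_mul_prodGen {k : ℕ} (h : k < N) :
    gen N 0 * (prodGen N (k + 1) * prodGen N k) = prodGen N (k + 1) * prodGen N k * gen N k := by
  induction k with
  | zero => simp [prodGen]
  | succ k ih =>
    have hcomm : prodGen N (k + 1 + 1) * prodGen N (k + 1) =
        prodGen N (k + 1) * prodGen N k * (gen N (k + 1) * gen N k) := by
      simp only [prodGen_succ]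
      rw [mul_assoc _ (gen N (k + 1)), ← mul_assoc (gen N (k + 1)),
        (commute_gen_prodGen (lt_add_one k)).eq]
      group
    rw [hcomm, ← mul_assoc, ih (by omega), mul_assoc, mul_assoc, ← mul_assoc (gen N k),
      gen_braid h]
    group

theorem gen_zero_mul_prodGen_sq :
    gen N 0 * prodGen N N ^ 2 = prodGen N N ^ 2 * gen N (N - 1) := by
  cases N with
  | zero => simp [gen]
  | succ k =>
    have hsq : prodGen (k + 1) (k + 1) ^ 2 =
        prodGen (k + 1) (k + 1) * prodGen (k + 1) k * gen (k + 1) k := by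
      rw [sq, mul_assoc, ← prodGen_succ]
    rw [hsq, ← mul_assoc, gen_zero_mul_prodGen_mul_prodGen (lt_add_one k), Nat.add_sub_cancel]

theorem commute_gen_zero_prodGen_pow (hN : 0 < N) :
    Commute (gen N 0) (prodGen N N ^ (N + 1)) := by
  have hrot := prodGen_pow_mul_gen (N := N) (i := 0) (k := N - 1) (by omega)
  rw [zero_add] at hrot
  calc gen N 0 * prodGen N N ^ (N + 1)
      = gen N 0 * prodGen N N ^ 2 * prodGen N N ^ (N - 1) := by
        rw [mul_assoc, ← pow_add, show 2 + (N - 1) = N + 1 by omega]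
    _ = prodGen N N ^ 2 * (gen N (N - 1) * prodGen N N ^ (N - 1)) := by
        rw [gen_zero_mul_prodGen_sq, mul_assoc]
    _ = prodGen N N ^ (N + 1) * gen N 0 := by
        rw [← hrot, ← mul_assoc, ← pow_add, show 2 + (N - 1) = N + 1 by omega]

theorem commute_gen_prodGen_pow {i : ℕ} (h : i < N) :
    Commute (gen N i) (prodGen N N ^ (N + 1)) := by
  have hconj : gen N i = prodGen N N ^ i * gen N 0 * (prodGen N N ^ i)⁻¹ := by
    rw [prodGen_pow_mul_gen (by omega), zero_add, mul_inv_cancel_right]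
  rw [hconj]
  exact ((Commute.pow_pow_self _ _ _).mul_left (commute_gen_zero_prodGen_pow (by omega))).mul_left
    (Commute.pow_pow_self _ _ _).inv_left

theorem ofFn_σ : List.ofFn (fun i : Fin N => σ i) = (List.range N).map (gen N) := by
  rw [List.ofFn_eq_pmap, ← List.pmap_eq_map (p := fun i => i < N) (H := fun _ => List.mem_range.1)]
  exact List.pmap_congr_left _ fun i _ hi _ => (gen_of_lt hi).symm

/-- The factorization `(σ₁ ⋯ σ_N)^(N+1)` of the full twist `Δ²` of `B_{N+1}`. -/
def fullTwist (N : ℕ) : List (BraidGroup N) :=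
  (List.replicate (N + 1) ((List.range N).map (gen N))).flatten

theorem prod_fullTwist : (fullTwist N).prod = prodGen N N ^ (N + 1) := by
  simp [fullTwist, List.prod_flatten, prodGen]

theorem commute_prod_fullTwist {x : BraidGroup N} (hx : x ∈ fullTwist N) :
    Commute x (fullTwist N).prod := by
  obtain ⟨i, hi, rfl⟩ : ∃ i < N, gen N i = x := by simpa [fullTwist] using hx
  rw [prod_fullTwist]
  exact commute_gen_prodGen_pow hi

theorem prodGen_mem_hurwitzStabilizer {k : ℕ} (hk : k ≤ N) :
    prodGen N k ∈ hurwitzStabilizer (fullTwist N) := by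
  set gens := (List.range N).map (gen N)
  have hsplit : fullTwist N = gens.take k ++ (gens.drop k ++ (List.replicate N gens).flatten) := by
    rw [← List.append_assoc, List.take_append_drop, fullTwist, List.replicate_succ,
      List.flatten_cons]
  have hprod : (gens.take k).prod = prodGen N k := by
    rw [← List.map_take, List.take_range, min_eq_left hk, prodGen]
  rw [← hprod, hsplit]
  exact prod_mem_hurwitzStabilizer fun x hx =>
    hsplit ▸ commute_prod_fullTwist (hsplit ▸ List.mem_append_left _ hx)

theorem gen_mem_hurwitzStabilizer (i : ℕ) : gen N i ∈ hurwitzStabilizer (fullTwist N) := by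
  by_cases hi : i < N
  · have hmul := mul_mem (inv_mem (prodGen_mem_hurwitzStabilizer hi.le))
      (prodGen_mem_hurwitzStabilizer hi)
    rwa [prodGen_succ, inv_mul_cancel_left] at hmul
  · simp [gen, hi, one_mem]

theorem hurwitzStabilizer_fullTwist_eq_top : hurwitzStabilizer (fullTwist N) = ⊤ :=
  eq_top_iff.2 fun b _ => PresentedGroup.generated_by _ _
    (fun i => show σ i ∈ _ by simpa [gen_of_lt i.isLt] using gen_mem_hurwitzStabilizer (N := N) i) b

theorem hurwitzEquiv_replicate_ofFn_conj (b : BraidGroup N) :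
    HurwitzEquiv (List.replicate (N + 1) (List.ofFn fun i : Fin N => σ i)).flatten
      (List.replicate (N + 1) (List.ofFn fun i : Fin N => b * σ i * b⁻¹)).flatten := by
  have hb : b ∈ hurwitzStabilizer (fullTwist N) := by
    simp [hurwitzStabilizer_fullTwist_eq_top]
  have hconj : (List.ofFn fun i : Fin N => b * σ i * b⁻¹) =
      (List.ofFn fun i : Fin N => σ i).map (MulAut.conj b) := by
    simp [List.map_ofFn, Function.comp_def]
  rw [mem_hurwitzStabilizer, fullTwist, List.map_flatten, List.map_replicate] at hb
  rwa [hconj, ofFn_σ]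

end BraidGroup

theorem hurwitz_equiv_conj_by_braid_general {n : ℕ} (b : BraidGroup (n - 1)) :
    HurwitzEquiv
      (List.replicate n (List.ofFn fun i : Fin (n - 1) => σ i)).flatten
      (List.replicate n (List.ofFn fun i : Fin (n - 1) => b * σ i * b⁻¹)).flatten := by
  cases n with
  | zero => exact HurwitzEquiv.refl []
  | succ N =>
    exact BraidGroup.hurwitzEquiv_replicate_ofFn_conj b

/-- Conjugating the standard `Δₙ²` factorization `(σ₁ ⋯ σₙ₋₁)ⁿ` by an
arbitrary braid `b` yields a Hurwitz equivalent factorization. -/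
theorem hurwitz_equiv_conj_by_braid {n : ℕ} (hn : 2 ≤ n) (b : BraidGroup (n - 1)) :
    HurwitzEquiv
      (List.replicate n (List.ofFn fun i : Fin (n - 1) => σ i)).flatten
      (List.replicate n (List.ofFn fun i : Fin (n - 1) => b * σ i * b⁻¹)).flatten :=
  hurwitz_equiv_conj_by_braid_general b
end
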